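/- Let θ : [0,∞) → ℝ^N solve the inertial Kuramoto model on a symmetric network with heterogeneous inertia and friction, and suppose there exist ā > 0 and δ ≥ 0 such that Σ_{j=1}^N |a_{ij} − ā| ≤ δ for every i, and such that the initial data satisfy Σ_{i,j=1}^N a_{ij}·cos(θ_i(0) − θ_j(0)) > Σ_{i=1}^N m_i·ω_i(0)² + 3δN + δ²/ā. Then for each i, the oscillator phases align with their local average phases asymptotically: lim_{t→∞} (1/R_{p,i}(t))·Σ_{j=1}^N a_{ij}·sin(θ_j(t) − θ_i(t)) = 0; equivalently, sin(θ_i(t) − φ_{p,i}(t)) → 0 as t → ∞, where φ_{p,i}(t) is the local average phase defined by R_{p,i}(t)·e^{√−1·φ_{p,i}(t)} = Σ_{j=1}^N a_{ij}·e^{√−1·θ_j(t)}. -/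

import Mathlib

/-!
The energy `E = Σ mᵢ ωᵢ² + Σ aᵢⱼ (1 - cos (θᵢ - θⱼ))` satisfies `E' = -2 Σ γᵢ ωᵢ²` thanks to
the symmetry of `a`, so it is nonincreasing and bounded below, hence convergent. Since `E t ≤ E 0`,
the frequencies, accelerations and coupling terms are bounded; hence the dissipation `Σ γᵢ ωᵢ²`
and the accelerations are uniformly continuous, and Barbalat's lemma (a convergent function with
uniformly continuous derivative has derivative tending to `0`) gives first `Σ γᵢ ωᵢ² → 0`, hence
`ωᵢ → 0`, and then `ωᵢ' → 0`; by the equation of motion the coupling term `Σⱼ aᵢⱼ sin (θⱼ - θᵢ)`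
tends to `0`. Finally `E t ≤ E 0` keeps `Σ aᵢⱼ cos (θᵢ - θⱼ)` above its initial margin; as the
network is `δ`-close to the all-to-all one of weight `ā`, this keeps `|Σⱼ e^{iθⱼ}|`, and with it
every local order parameter `R_{p,i}`, uniformly away from `0`.
-/

open Filter Set Topology Complex

theorem UniformContinuousOn.add {α : Type*} [UniformSpace α] {f g : α → ℝ} {s : Set α}
    (hf : UniformContinuousOn f s) (hg : UniformContinuousOn g s) :
    UniformContinuousOn (fun x => f x + g x) s := by
  rw [uniformContinuousOn_iff_restrict] at *
  exact hf.add hg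

theorem UniformContinuousOn.const_mul {α : Type*} [UniformSpace α] {f : α → ℝ} {s : Set α}
    (hf : UniformContinuousOn f s) (c : ℝ) : UniformContinuousOn (fun x => c * f x) s := by
  rw [uniformContinuousOn_iff_restrict] at *
  exact hf.const_mul' c

theorem uniformContinuousOn_Ici_of_hasDerivAt_of_abs_le {f f' : ℝ → ℝ} {a C : ℝ}
    (hf : ∀ t ∈ Ici a, HasDerivAt f (f' t) t) (hC : ∀ t ∈ Ici a, |f' t| ≤ C) :
    UniformContinuousOn f (Ici a) :=
  ((convex_Ici a).lipschitzOnWith_of_nnnorm_hasDerivWithin_le (C := C.toNNReal)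
    (fun t ht => (hf t ht).hasDerivWithinAt)
    (fun t ht => by
      rw [← NNReal.coe_le_coe, coe_nnnorm, Real.coe_toNNReal']
      exact (hC t ht).trans (le_max_left _ _))).uniformContinuousOn

theorem tendsto_zero_of_hasDerivAt_of_uniformContinuousOn {f f' : ℝ → ℝ} {a c : ℝ}
    (hf : ∀ t ∈ Ici a, HasDerivAt f (f' t) t) (hf' : UniformContinuousOn f' (Ici a))
    (hc : Tendsto f atTop (𝓝 c)) : Tendsto f' atTop (𝓝 0) := by
  rw [Metric.tendsto_nhds]
  intro ε hε
  obtain ⟨d, hd, hclose⟩ := Metric.uniformContinuousOn_iff.1 hf' (ε / 2) (half_pos hε)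
  obtain ⟨h, hh, hhd⟩ : ∃ h, 0 < h ∧ h < d := ⟨d / 2, half_pos hd, half_lt_self hd⟩
  have hslope : Tendsto (fun t => (f (t + h) - f t) / h) atTop (𝓝 0) := by
    simpa using ((hc.comp (tendsto_atTop_add_const_right _ h tendsto_id)).sub hc).div_const h
  filter_upwards [Metric.tendsto_nhds.1 hslope (ε / 2) (half_pos hε), eventually_ge_atTop a]
    with t hslope_t hat
  have hseg : ∀ u ∈ Icc t (t + h), u ∈ Ici a := fun u hu => hat.trans hu.1
  obtain ⟨u, hu, hfu⟩ := exists_hasDerivAt_eq_slope f f' (lt_add_of_pos_right t hh)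
    (fun u hu => (hf u (hseg u hu)).continuousAt.continuousWithinAt)
    (fun u hu => hf u (hseg u (Ioo_subset_Icc_self hu)))
  rw [add_sub_cancel_left] at hfu
  rw [← hfu] at hslope_t
  have hut : dist u t < d := by
    rw [Real.dist_eq, abs_lt]
    constructor <;> linarith [hu.1, hu.2]
  calc dist (f' t) 0 ≤ dist (f' u) (f' t) + dist (f' u) 0 := dist_triangle_left _ _ _
    _ < ε / 2 + ε / 2 := add_lt_add (hclose u (hseg u (Ioo_subset_Icc_self hu)) t hat hut) hslope_t
    _ = ε := add_halves ε

theorem AntitoneOn.exists_tendsto_atTop {f : ℝ → ℝ} {a : ℝ} (hf : AntitoneOn f (Ici a))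
    (hb : BddBelow (f '' Ici a)) : ∃ c, Tendsto f atTop (𝓝 c) := by
  have hanti : Antitone fun t => f (max t a) := fun s t hst =>
    hf (le_max_right s a) (le_max_right t a) (max_le_max_right a hst)
  have hbdd : BddBelow (range fun t => f (max t a)) :=
    hb.mono (range_subset_iff.2 fun t => mem_image_of_mem f (le_max_right t a))
  refine ⟨_, (tendsto_atTop_ciInf hanti hbdd).congr' ?_⟩
  filter_upwards [eventually_ge_atTop a] with t ht
  rw [max_eq_left ht]

theorem tendsto_inv_mul_of_le {α : Type*} {l : Filter α} {R S : α → ℝ} {c : ℝ} (hc : 0 < c)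
    (hR : ∀ᶠ x in l, c ≤ R x) (hS : Tendsto S l (𝓝 0)) :
    Tendsto (fun x => (R x)⁻¹ * S x) l (𝓝 0) := by
  refine squeeze_zero_norm' ?_ (by simpa using (hS.norm.const_mul c⁻¹))
  filter_upwards [hR] with x hx
  rw [norm_mul, norm_inv, Real.norm_of_nonneg (hc.le.trans hx), Real.norm_eq_abs]
  gcongr

section OrderParameter

variable {ι : Type*} [Fintype ι]

theorem norm_sum_exp_I_mul_sq (x : ι → ℝ) :
    ‖∑ j, cexp (I * x j)‖ ^ 2 = ∑ j, ∑ k, Real.cos (x j - x k) := by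
  have hprod : (∑ j, cexp (I * x j)) * (starRingEnd ℂ) (∑ k, cexp (I * x k))
      = ∑ j, ∑ k, cexp (((x j - x k : ℝ) : ℂ) * I) := by
    rw [map_sum, Finset.sum_mul_sum]
    refine Finset.sum_congr rfl fun j _ => Finset.sum_congr rfl fun k _ => ?_
    rw [← Complex.exp_conj, map_mul, Complex.conj_I, Complex.conj_ofReal, ← Complex.exp_add]
    push_cast
    ring_nf
  have := congrArg Complex.re hprod
  rw [Complex.mul_conj, Complex.normSq_eq_norm_sq, Complex.re_sum] at this
  norm_cast at this
  rw [this]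
  simp only [Complex.re_sum, Complex.exp_ofReal_mul_I_re]

theorem sum_sum_mul_cos_le_of_sum_abs_sub_le {a : ι → ι → ℝ} {abar δ : ℝ}
    (hnet : ∀ i, ∑ j, |a i j - abar| ≤ δ) (x : ι → ℝ) :
    ∑ i, ∑ j, a i j * Real.cos (x i - x j)
      ≤ abar * ∑ i, ∑ j, Real.cos (x i - x j) + δ * Fintype.card ι := by
  have hrow : ∀ i, ∑ j, (a i j - abar) * Real.cos (x i - x j) ≤ δ := fun i =>
    calc ∑ j, (a i j - abar) * Real.cos (x i - x j) ≤ ∑ j, |a i j - abar| :=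
          Finset.sum_le_sum fun j _ =>
            (le_abs_self _).trans ((abs_mul _ _).trans_le
              (mul_le_of_le_one_right (abs_nonneg _) (Real.abs_cos_le_one _)))
      _ ≤ δ := hnet i
  have := Finset.sum_le_sum fun i (_ : i ∈ Finset.univ) => hrow i
  simp only [sub_mul, Finset.sum_sub_distrib, Finset.sum_const, Finset.card_univ,
    nsmul_eq_mul, ← Finset.mul_sum] at this
  linarith

theorem sub_le_norm_sum_mul_exp_I_mul {b : ι → ℝ} {abar δ : ℝ} (habar : 0 ≤ abar)
    (hb : ∑ j, |b j - abar| ≤ δ) (x : ι → ℝ) :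
    abar * ‖∑ j, cexp (I * x j)‖ - δ ≤ ‖∑ j, (b j : ℂ) * cexp (I * x j)‖ := by
  have hdecomp : ∑ j, (b j : ℂ) * cexp (I * x j)
      = abar * ∑ j, cexp (I * x j) + ∑ j, ((b j - abar : ℝ) : ℂ) * cexp (I * x j) := by
    rw [Finset.mul_sum, ← Finset.sum_add_distrib]
    refine Finset.sum_congr rfl fun j _ => ?_
    push_cast
    ring
  have hdev : ‖∑ j, ((b j - abar : ℝ) : ℂ) * cexp (I * x j)‖ ≤ δ :=
    calc _ ≤ ∑ j, ‖((b j - abar : ℝ) : ℂ) * cexp (I * x j)‖ := norm_sum_le _ _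
      _ = ∑ j, |b j - abar| := by
        simp only [norm_mul, Complex.norm_real, Real.norm_eq_abs,
          Complex.norm_exp_I_mul_ofReal, mul_one]
      _ ≤ δ := hb
  have := norm_sub_norm_le ((abar : ℂ) * ∑ j, cexp (I * x j))
    (-∑ j, ((b j - abar : ℝ) : ℂ) * cexp (I * x j))
  rw [norm_neg, sub_neg_eq_add, ← hdecomp, norm_mul, Complex.norm_real,
    Real.norm_of_nonneg habar] at this
  linarith

theorem exists_pos_le_norm_sum_mul_exp_I_mul {a : ι → ι → ℝ} {abar δ K : ℝ} (habar : 0 < abar)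
    (hδ : 0 ≤ δ) (hnet : ∀ i, ∑ j, |a i j - abar| ≤ δ)
    (hK : δ * Fintype.card ι + δ ^ 2 / abar < K) :
    ∃ c > 0, ∀ x : ι → ℝ, K ≤ ∑ i, ∑ j, a i j * Real.cos (x i - x j) →
      ∀ i, c ≤ ‖∑ j, (a i j : ℂ) * cexp (I * x j)‖ := by
  set q := (K - δ * Fintype.card ι) / abar
  refine ⟨abar * √q - δ, ?_, fun x hx i => ?_⟩
  · have hq : δ ^ 2 < abar ^ 2 * q := by
      have : δ ^ 2 / abar < K - δ * Fintype.card ι := by linarith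
      rw [div_lt_iff₀ habar] at this
      calc δ ^ 2 < (K - δ * Fintype.card ι) * abar := this
        _ = abar ^ 2 * q := by simp only [q]; field_simp
    have : δ < abar * √q := by
      rw [← Real.sqrt_sq habar.le, ← Real.sqrt_mul (sq_nonneg _)]
      exact Real.lt_sqrt hδ |>.2 hq
    linarith
  · have hZ : √q ≤ ‖∑ j, cexp (I * x j)‖ := by
      rw [Real.sqrt_le_left (norm_nonneg _), norm_sum_exp_I_mul_sq, div_le_iff₀ habar]
      linarith [sum_sum_mul_cos_le_of_sum_abs_sub_le hnet x]
    have := sub_le_norm_sum_mul_exp_I_mul habar.le (hnet i) x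
    nlinarith

end OrderParameter

noncomputable section

namespace InertialKuramoto

variable {ι : Type*} [Fintype ι]

def frequency (θ : ℝ → ι → ℝ) (i : ι) : ℝ → ℝ := deriv fun s => θ s i

def coupling (a : ι → ι → ℝ) (x : ι → ℝ) (i : ι) : ℝ := ∑ j, a i j * Real.sin (x j - x i)

def acceleration (m γ : ι → ℝ) (a : ι → ι → ℝ) (θ : ℝ → ι → ℝ) (i : ι) (t : ℝ) : ℝ :=
  (-γ i * frequency θ i t + coupling a (θ t) i) / m i

def potential (a : ι → ι → ℝ) (x : ι → ℝ) : ℝ := ∑ i, ∑ j, a i j * (1 - Real.cos (x i - x j))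

def energy (m : ι → ℝ) (a : ι → ι → ℝ) (θ : ℝ → ι → ℝ) (t : ℝ) : ℝ :=
  ∑ i, m i * frequency θ i t ^ 2 + potential a (θ t)

def dissipation (γ : ι → ℝ) (θ : ℝ → ι → ℝ) (t : ℝ) : ℝ := ∑ i, γ i * frequency θ i t ^ 2

structure IsSolution (m γ : ι → ℝ) (a : ι → ι → ℝ) (θ : ℝ → ι → ℝ) : Prop where
  mass_pos : ∀ i, 0 < m i
  damping_pos : ∀ i, 0 < γ i
  symm : ∀ i j, a i j = a j i
  nonneg : ∀ i j, 0 ≤ a i j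
  contDiff : ∀ i, ContDiff ℝ 2 fun t => θ t i
  ode : ∀ t ≥ 0, ∀ i,
    m i * deriv (frequency θ i) t = -γ i * frequency θ i t + coupling a (θ t) i

variable {m γ : ι → ℝ} {a : ι → ι → ℝ} {θ : ℝ → ι → ℝ}

theorem abs_coupling_le (hnn : ∀ i j, 0 ≤ a i j) (x : ι → ℝ) (i : ι) :
    |coupling a x i| ≤ ∑ j, a i j :=
  (Finset.abs_sum_le_sum_abs _ _).trans <| Finset.sum_le_sum fun j _ => by
    rw [abs_mul, abs_of_nonneg (hnn i j)]
    exact mul_le_of_le_one_right (hnn i j) (Real.abs_sin_le_one _)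

theorem potential_nonneg (hnn : ∀ i j, 0 ≤ a i j) (x : ι → ℝ) : 0 ≤ potential a x :=
  Finset.sum_nonneg fun i _ => Finset.sum_nonneg fun j _ =>
    mul_nonneg (hnn i j) (sub_nonneg.2 (Real.cos_le_one _))

theorem potential_eq (a : ι → ι → ℝ) (x : ι → ℝ) :
    potential a x = ∑ i, ∑ j, a i j - ∑ i, ∑ j, a i j * Real.cos (x i - x j) := by
  simp only [potential, mul_sub, mul_one, Finset.sum_sub_distrib]

theorem sum_sum_mul_sin_mul_sub (hsym : ∀ i j, a i j = a j i) (x v : ι → ℝ) :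
    ∑ i, ∑ j, a i j * (Real.sin (x i - x j) * (v i - v j))
      = -2 * ∑ i, v i * coupling a x i := by
  have hswap : ∑ i, ∑ j, a i j * Real.sin (x i - x j) * v j
      = ∑ i, ∑ j, a i j * Real.sin (x j - x i) * v i := by
    rw [Finset.sum_comm]
    simp only [hsym]
  have hterm : ∀ i j, a i j * (Real.sin (x i - x j) * (v i - v j))
      = -(a i j * Real.sin (x j - x i) * v i) - a i j * Real.sin (x i - x j) * v j := by
    intro i j
    rw [← neg_sub (x j), Real.sin_neg]
    ring
  have hcomm : ∀ i j, v i * (a i j * Real.sin (x j - x i)) = a i j * Real.sin (x j - x i) * v i :=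
    fun i j => mul_comm _ _
  calc _ = ∑ i, ∑ j, -(a i j * Real.sin (x j - x i) * v i)
        - ∑ i, ∑ j, a i j * Real.sin (x i - x j) * v j := by
        simp only [hterm, Finset.sum_sub_distrib]
    _ = -2 * ∑ i, ∑ j, a i j * Real.sin (x j - x i) * v i := by
        rw [hswap]
        simp only [Finset.sum_neg_distrib]
        ring
    _ = -2 * ∑ i, v i * coupling a x i := by
        simp only [coupling, Finset.mul_sum, hcomm]

namespace IsSolution

theorem hasDerivAt_phase (hθ : IsSolution m γ a θ) (i : ι) (t : ℝ) :
    HasDerivAt (fun s => θ s i) (frequency θ i t) t :=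
  ((hθ.contDiff i).differentiable two_ne_zero t).hasDerivAt

theorem hasDerivAt_frequency (hθ : IsSolution m γ a θ) {t : ℝ} (ht : 0 ≤ t) (i : ι) :
    HasDerivAt (frequency θ i) (acceleration m γ a θ i t) t := by
  have hacc : acceleration m γ a θ i t = deriv (frequency θ i) t := by
    rw [acceleration, ← hθ.ode t ht i, mul_div_cancel_left₀ _ (hθ.mass_pos i).ne']
  rw [hacc]
  exact ((hθ.contDiff i).differentiable_deriv_two t).hasDerivAt

theorem hasDerivAt_potential (hθ : IsSolution m γ a θ) (t : ℝ) :
    HasDerivAt (fun s => potential a (θ s))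
      (-2 * ∑ i, frequency θ i t * coupling a (θ t) i) t := by
  rw [← sum_sum_mul_sin_mul_sub hθ.symm]
  refine HasDerivAt.fun_sum fun i _ => HasDerivAt.fun_sum fun j _ => ?_
  refine ((((hθ.hasDerivAt_phase i t).sub (hθ.hasDerivAt_phase j t)).cos.const_sub 1).const_mul
    (a i j)).congr_deriv ?_
  simp only [Pi.sub_apply]
  ring

theorem hasDerivAt_energy (hθ : IsSolution m γ a θ) {t : ℝ} (ht : 0 ≤ t) :
    HasDerivAt (energy m a θ) (-2 * dissipation γ θ t) t := by
  have hkin : HasDerivAt (fun s => ∑ i, m i * frequency θ i s ^ 2)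
      (∑ i, m i * (2 * frequency θ i t * acceleration m γ a θ i t)) t :=
    HasDerivAt.fun_sum fun i _ => by
      simpa using ((hθ.hasDerivAt_frequency ht i).pow 2).const_mul (m i)
  refine (hkin.add (hθ.hasDerivAt_potential t)).congr_deriv ?_
  simp only [dissipation, acceleration, Finset.mul_sum, ← Finset.sum_add_distrib]
  refine Finset.sum_congr rfl fun i _ => ?_
  field_simp [(hθ.mass_pos i).ne']
  ring

theorem dissipation_nonneg (hθ : IsSolution m γ a θ) (t : ℝ) : 0 ≤ dissipation γ θ t :=
  Finset.sum_nonneg fun i _ => mul_nonneg (hθ.damping_pos i).le (sq_nonneg _)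

theorem mass_mul_frequency_sq_le_energy (hθ : IsSolution m γ a θ) (i : ι) (t : ℝ) :
    m i * frequency θ i t ^ 2 ≤ energy m a θ t :=
  (Finset.single_le_sum (f := fun k => m k * frequency θ k t ^ 2)
    (fun k _ => mul_nonneg (hθ.mass_pos k).le (sq_nonneg _)) (Finset.mem_univ i)).trans
    (le_add_of_nonneg_right (potential_nonneg hθ.nonneg _))

theorem energy_nonneg (hθ : IsSolution m γ a θ) (t : ℝ) : 0 ≤ energy m a θ t :=
  add_nonneg (Finset.sum_nonneg fun i _ => mul_nonneg (hθ.mass_pos i).le (sq_nonneg _))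
    (potential_nonneg hθ.nonneg _)

theorem energy_antitoneOn (hθ : IsSolution m γ a θ) : AntitoneOn (energy m a θ) (Ici 0) := by
  refine antitoneOn_of_deriv_nonpos (convex_Ici 0)
    (fun t ht => (hθ.hasDerivAt_energy ht).continuousAt.continuousWithinAt)
    (fun t ht =>
      (hθ.hasDerivAt_energy (interior_subset ht)).differentiableAt.differentiableWithinAt)
    fun t ht => ?_
  rw [(hθ.hasDerivAt_energy (interior_subset ht)).deriv]
  linarith [hθ.dissipation_nonneg t]

theorem energy_le (hθ : IsSolution m γ a θ) {t : ℝ} (ht : 0 ≤ t) :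
    energy m a θ t ≤ energy m a θ 0 :=
  hθ.energy_antitoneOn self_mem_Ici ht ht

theorem exists_tendsto_energy (hθ : IsSolution m γ a θ) :
    ∃ c, Tendsto (energy m a θ) atTop (𝓝 c) :=
  hθ.energy_antitoneOn.exists_tendsto_atTop ⟨0, by
    rintro _ ⟨t, -, rfl⟩
    exact hθ.energy_nonneg t⟩

theorem abs_frequency_le (hθ : IsSolution m γ a θ) {t : ℝ} (ht : 0 ≤ t) (i : ι) :
    |frequency θ i t| ≤ √(energy m a θ 0 / m i) := by
  rw [← Real.sqrt_sq_eq_abs]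
  refine Real.sqrt_le_sqrt ?_
  rw [le_div_iff₀ (hθ.mass_pos i), mul_comm]
  exact (hθ.mass_mul_frequency_sq_le_energy i t).trans (hθ.energy_le ht)

theorem exists_abs_acceleration_le (hθ : IsSolution m γ a θ) (i : ι) :
    ∃ C, ∀ t ∈ Ici 0, |acceleration m γ a θ i t| ≤ C := by
  refine ⟨(γ i * √(energy m a θ 0 / m i) + ∑ j, a i j) / m i, fun t ht => ?_⟩
  rw [acceleration, abs_div, abs_of_pos (hθ.mass_pos i)]
  gcongr
  · exact (hθ.mass_pos i).le
  calc |-γ i * frequency θ i t + coupling a (θ t) i|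
      ≤ γ i * |frequency θ i t| + |coupling a (θ t) i| := by
        refine (abs_add_le _ _).trans_eq ?_
        rw [abs_mul, abs_neg, abs_of_pos (hθ.damping_pos i)]
    _ ≤ γ i * √(energy m a θ 0 / m i) + ∑ j, a i j := by
        gcongr
        · exact (hθ.damping_pos i).le
        · exact hθ.abs_frequency_le ht i
        · exact abs_coupling_le hθ.nonneg _ i

theorem uniformContinuousOn_frequency (hθ : IsSolution m γ a θ) (i : ι) :
    UniformContinuousOn (frequency θ i) (Ici 0) :=
  let ⟨_, hC⟩ := hθ.exists_abs_acceleration_le i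
  uniformContinuousOn_Ici_of_hasDerivAt_of_abs_le (fun _ ht => hθ.hasDerivAt_frequency ht i) hC

theorem hasDerivAt_coupling (hθ : IsSolution m γ a θ) (i : ι) (t : ℝ) :
    HasDerivAt (fun s => coupling a (θ s) i)
      (∑ j, a i j * (Real.cos (θ t j - θ t i) * (frequency θ j t - frequency θ i t))) t :=
  HasDerivAt.fun_sum fun j _ =>
    (((hθ.hasDerivAt_phase j t).sub (hθ.hasDerivAt_phase i t)).sin).const_mul (a i j)

theorem uniformContinuousOn_coupling (hθ : IsSolution m γ a θ) (i : ι) :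
    UniformContinuousOn (fun t => coupling a (θ t) i) (Ici 0) := by
  refine uniformContinuousOn_Ici_of_hasDerivAt_of_abs_le (fun t _ => hθ.hasDerivAt_coupling i t)
    (C := ∑ j, a i j * (√(energy m a θ 0 / m j) + √(energy m a θ 0 / m i))) fun t ht => ?_
  refine (Finset.abs_sum_le_sum_abs _ _).trans (Finset.sum_le_sum fun j _ => ?_)
  rw [abs_mul, abs_of_nonneg (hθ.nonneg i j), abs_mul]
  gcongr
  · exact hθ.nonneg i j
  calc |Real.cos (θ t j - θ t i)| * |frequency θ j t - frequency θ i t|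
      ≤ 1 * (|frequency θ j t| + |frequency θ i t|) := by
        gcongr
        · exact Real.abs_cos_le_one _
        · exact abs_sub _ _
    _ ≤ _ := by
        rw [one_mul]
        exact add_le_add (hθ.abs_frequency_le ht j) (hθ.abs_frequency_le ht i)

theorem uniformContinuousOn_acceleration (hθ : IsSolution m γ a θ) (i : ι) :
    UniformContinuousOn (acceleration m γ a θ i) (Ici 0) := by
  have h : acceleration m γ a θ i
      = fun t => -γ i / m i * frequency θ i t + (m i)⁻¹ * coupling a (θ t) i := by
    funext t
    rw [acceleration]
    ring
  rw [h]
  exact ((hθ.uniformContinuousOn_frequency i).const_mul _).add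
    ((hθ.uniformContinuousOn_coupling i).const_mul _)

theorem uniformContinuousOn_dissipation (hθ : IsSolution m γ a θ) :
    UniformContinuousOn (dissipation γ θ) (Ici 0) := by
  choose C hC using hθ.exists_abs_acceleration_le
  refine uniformContinuousOn_Ici_of_hasDerivAt_of_abs_le
    (f' := fun t => ∑ i, γ i * (2 * frequency θ i t * acceleration m γ a θ i t))
    (C := ∑ i, γ i * (2 * √(energy m a θ 0 / m i) * C i))
    (fun t ht => HasDerivAt.fun_sum fun i _ => by
      simpa using ((hθ.hasDerivAt_frequency ht i).pow 2).const_mul (γ i))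
    fun t ht => ?_
  refine (Finset.abs_sum_le_sum_abs _ _).trans (Finset.sum_le_sum fun i _ => ?_)
  rw [abs_mul, abs_of_pos (hθ.damping_pos i), abs_mul, abs_mul, abs_two]
  gcongr
  · exact (hθ.damping_pos i).le
  · exact hθ.abs_frequency_le ht i
  · exact hC i t ht

theorem tendsto_dissipation (hθ : IsSolution m γ a θ) :
    Tendsto (dissipation γ θ) atTop (𝓝 0) := by
  obtain ⟨c, hc⟩ := hθ.exists_tendsto_energy
  have h := tendsto_zero_of_hasDerivAt_of_uniformContinuousOn
    (fun t ht => hθ.hasDerivAt_energy ht) (hθ.uniformContinuousOn_dissipation.const_mul (-2)) hc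
  rw [← mul_zero (-1 / 2 : ℝ)]
  exact (h.const_mul (-1 / 2)).congr fun t => by ring

theorem tendsto_frequency (hθ : IsSolution m γ a θ) (i : ι) :
    Tendsto (frequency θ i) atTop (𝓝 0) := by
  have hγ := hθ.damping_pos i
  refine squeeze_zero_norm (a := fun t => √(dissipation γ θ t / γ i)) (fun t => ?_) ?_
  · rw [Real.norm_eq_abs, ← Real.sqrt_sq_eq_abs]
    refine Real.sqrt_le_sqrt ?_
    rw [le_div_iff₀ hγ, mul_comm]
    exact Finset.single_le_sum (f := fun k => γ k * frequency θ k t ^ 2)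
      (fun k _ => mul_nonneg (hθ.damping_pos k).le (sq_nonneg _)) (Finset.mem_univ i)
  · simpa using ((hθ.tendsto_dissipation.div_const (γ i)).sqrt)

theorem tendsto_acceleration (hθ : IsSolution m γ a θ) (i : ι) :
    Tendsto (acceleration m γ a θ i) atTop (𝓝 0) :=
  tendsto_zero_of_hasDerivAt_of_uniformContinuousOn (fun _ ht => hθ.hasDerivAt_frequency ht i)
    (hθ.uniformContinuousOn_acceleration i) (hθ.tendsto_frequency i)

theorem tendsto_coupling (hθ : IsSolution m γ a θ) (i : ι) :
    Tendsto (fun t => coupling a (θ t) i) atTop (𝓝 0) := by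
  have h := ((hθ.tendsto_acceleration i).const_mul (m i)).add
    ((hθ.tendsto_frequency i).const_mul (γ i))
  simp only [mul_zero, add_zero] at h
  refine h.congr fun t => ?_
  rw [acceleration, mul_div_cancel₀ _ (hθ.mass_pos i).ne']
  ring

theorem sum_sum_mul_cos_ge (hθ : IsSolution m γ a θ) {t : ℝ} (ht : 0 ≤ t) :
    ∑ i, ∑ j, a i j * Real.cos (θ 0 i - θ 0 j) - ∑ i, m i * frequency θ i 0 ^ 2
      ≤ ∑ i, ∑ j, a i j * Real.cos (θ t i - θ t j) := by
  have h := hθ.energy_le ht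
  simp only [energy, potential_eq] at h
  linarith [Finset.sum_nonneg fun i (_ : i ∈ Finset.univ) =>
    mul_nonneg (hθ.mass_pos i).le (sq_nonneg (frequency θ i t))]

end IsSolution

end InertialKuramoto

end

theorem kuramoto_heterogeneous_phase_alignment_general
    (N : ℕ)
    (m γ : Fin N → ℝ) (hm : ∀ i, 0 < m i) (hγ : ∀ i, 0 < γ i)
    (a : Fin N → Fin N → ℝ)
    (hsym : ∀ i j, a i j = a j i) (hnn : ∀ i j, 0 ≤ a i j)
    (θ : ℝ → Fin N → ℝ)
    (hreg : ∀ i, ContDiff ℝ 2 (fun t => θ t i))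
    (hode : ∀ t ≥ (0:ℝ), ∀ i,
      m i * deriv (deriv (fun s => θ s i)) t
        = -γ i * deriv (fun s => θ s i) t
          + ∑ j, a i j * Real.sin (θ t j - θ t i))
    (abar δ : ℝ) (habar : 0 < abar)
    (hnet : ∀ i, ∑ j, |a i j - abar| ≤ δ)
    (hinit : ∑ i, ∑ j, a i j * Real.cos (θ 0 i - θ 0 j)
      > ∑ i, m i * (deriv (fun s => θ s i) 0) ^ 2
        + 3 * δ * N + δ ^ 2 / abar)
    (Rpi : Fin N → ℝ → ℝ)
    (hRpi : Rpi = fun i t =>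
      ‖∑ j, (a i j : ℂ) * Complex.exp (Complex.I * (θ t j : ℂ))‖) :
    ∀ i, Tendsto
      (fun t => (Rpi i t)⁻¹ * ∑ j, a i j * Real.sin (θ t j - θ t i))
      atTop (nhds 0) := by
  intro i
  have hθ : InertialKuramoto.IsSolution m γ a θ := ⟨hm, hγ, hsym, hnn, hreg, hode⟩
  have hδ : 0 ≤ δ := (Finset.sum_nonneg fun j _ => abs_nonneg _).trans (hnet i)
  obtain ⟨c, hc, hR⟩ := exists_pos_le_norm_sum_mul_exp_I_mul habar hδ hnet
    (K := ∑ i, ∑ j, a i j * Real.cos (θ 0 i - θ 0 j) - ∑ i, m i * deriv (fun s => θ s i) 0 ^ 2) (by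
      rw [Fintype.card_fin]
      linarith [mul_nonneg hδ (Nat.cast_nonneg (α := ℝ) N)])
  subst hRpi
  exact tendsto_inv_mul_of_le hc
    (eventually_ge_atTop 0 |>.mono fun t ht => hR _ (hθ.sum_sum_mul_cos_ge ht) i)
    (hθ.tendsto_coupling i)

/-- Asymptotic alignment of each oscillator with its local
average phase for the inertial Kuramoto model on a nearly all-to-all
symmetric network: under the initial condition
`Σ_{i,j} a_{ij}·cos(θ_i(0) − θ_j(0)) > Σ_i m_i·ω_i(0)² + 3δN + δ²/ā`,
one has `(1/R_{p,i}(t))·Σ_j a_{ij}·sin(θ_j(t) − θ_i(t)) → 0` as `t → ∞`,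
i.e. `sin(θ_i(t) − φ_{p,i}(t)) → 0`. -/
theorem kuramoto_heterogeneous_phase_alignment
    (N : ℕ) (hN : 1 ≤ N)
    (m γ : Fin N → ℝ) (hm : ∀ i, 0 < m i) (hγ : ∀ i, 0 < γ i)
    (a : Fin N → Fin N → ℝ)
    (hsym : ∀ i j, a i j = a j i) (hnn : ∀ i j, 0 ≤ a i j)
    (θ : ℝ → Fin N → ℝ)
    (hreg : ∀ i, ContDiff ℝ 2 (fun t => θ t i))
    (hode : ∀ t ≥ (0:ℝ), ∀ i,
      m i * deriv (deriv (fun s => θ s i)) t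
        = -γ i * deriv (fun s => θ s i) t
          + ∑ j, a i j * Real.sin (θ t j - θ t i))
    (abar δ : ℝ) (habar : 0 < abar) (hδ : 0 ≤ δ)
    (hnet : ∀ i, ∑ j, |a i j - abar| ≤ δ)
    (hinit : ∑ i, ∑ j, a i j * Real.cos (θ 0 i - θ 0 j)
      > ∑ i, m i * (deriv (fun s => θ s i) 0) ^ 2
        + 3 * δ * N + δ ^ 2 / abar)
    (Rpi : Fin N → ℝ → ℝ)
    (hRpi : Rpi = fun i t =>
      ‖∑ j, (a i j : ℂ) * Complex.exp (Complex.I * (θ t j : ℂ))‖) :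
    ∀ i, Tendsto
      (fun t => (Rpi i t)⁻¹ * ∑ j, a i j * Real.sin (θ t j - θ t i))
      atTop (nhds 0) :=
  kuramoto_heterogeneous_phase_alignment_general N m γ hm hγ a hsym hnn θ hreg hode abar δ habar
    hnet hinit Rpi hRpi
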